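/- arXiv:2305.07371 — 6 statements merged into one kernel-verified Lean document; each statement's English description precedes it below -/
import Mathlib

section
/- Let Z be a Zinbiel algebra (a nonassociative algebra satisfying (x·y)·z = x·(y·z + z·y)) over a field k with a derivation d. Define x ≺ y = x·d(y) and x ≻ y = d(x)·y. Then (x₁ ≺ x₂) ≺ x₃ = (x₁ ≺ x₃) ≺ x₂ for all x₁, x₂, x₃ ∈ Z. -/
/-- In a Zinbiel algebra with a derivation, with x ≺ y = x·d(y) and x ≻ y = d(x)·y,
one has (x₁ ≺ x₂) ≺ x₃ = (x₁ ≺ x₃) ≺ x₂. -/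
theorem preNovikov_identity1 (k Z : Type) [Field k] [AddCommGroup Z] [Module k Z]
    (mul : Z →ₗ[k] Z →ₗ[k] Z)
    (zinb : ∀ x y z : Z, mul (mul x y) z = mul x (mul y z) + mul x (mul z y))
    (d : Z →ₗ[k] Z)
    (hd : ∀ x y : Z, d (mul x y) = mul (d x) y + mul x (d y)) :
    ∀ x₁ x₂ x₃ : Z, mul (mul x₁ (d x₂)) (d x₃) = mul (mul x₁ (d x₃)) (d x₂) := by
  intro x₁ x₂ x₃
  rw [zinb, zinb, add_comm]
end

section
/- Let Z be a Zinbiel algebra with derivation d, and define x ≺ y = x·d(y), x ≻ y = d(x)·y. Then x₁ ≻ (x₂ ≻ x₃) = (x₁ ≻ x₃) ≺ x₂ − x₁ ≻ (x₃ ≺ x₂) for all x₁, x₂, x₃ ∈ Z. -/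
/-- In a Zinbiel algebra with a derivation, with x ≺ y = x·d(y) and x ≻ y = d(x)·y,
one has x₁ ≻ (x₂ ≻ x₃) = (x₁ ≻ x₃) ≺ x₂ − x₁ ≻ (x₃ ≺ x₂). -/
theorem preNovikov_identity2 (k Z : Type) [Field k] [AddCommGroup Z] [Module k Z]
    (mul : Z →ₗ[k] Z →ₗ[k] Z)
    (zinb : ∀ x y z : Z, mul (mul x y) z = mul x (mul y z) + mul x (mul z y))
    (d : Z →ₗ[k] Z)
    (hd : ∀ x y : Z, d (mul x y) = mul (d x) y + mul x (d y)) :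
    ∀ x₁ x₂ x₃ : Z,
      mul (d x₁) (mul (d x₂) x₃) =
        mul (mul (d x₁) x₃) (d x₂) - mul (d x₁) (mul x₃ (d x₂)) := by
  intro x₁ x₂ x₃
  rw [zinb]
  abel
end

section
/- Let Z be a Zinbiel algebra with derivation d, and define x ≺ y = x·d(y), x ≻ y = d(x)·y. Then (x₁ ≻ x₂) ≻ x₃ = (x₁ ≻ x₃) ≻ x₂ + (x₁ ≻ x₃) ≺ x₂ − (x₁ ≻ x₂) ≺ x₃ for all x₁, x₂, x₃ ∈ Z. -/
/-- In a Zinbiel algebra with a derivation, with x ≺ y = x·d(y) and x ≻ y = d(x)·y,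
one has (x₁ ≻ x₂) ≻ x₃ = (x₁ ≻ x₃) ≻ x₂ + (x₁ ≻ x₃) ≺ x₂ − (x₁ ≻ x₂) ≺ x₃. -/
theorem preNovikov_identity3 (k Z : Type) [Field k] [AddCommGroup Z] [Module k Z]
    (mul : Z →ₗ[k] Z →ₗ[k] Z)
    (zinb : ∀ x y z : Z, mul (mul x y) z = mul x (mul y z) + mul x (mul z y))
    (d : Z →ₗ[k] Z)
    (hd : ∀ x y : Z, d (mul x y) = mul (d x) y + mul x (d y)) :
    ∀ x₁ x₂ x₃ : Z,
      mul (d (mul (d x₁) x₂)) x₃ =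
        mul (d (mul (d x₁) x₃)) x₂ + mul (mul (d x₁) x₃) (d x₂)
          - mul (mul (d x₁) x₂) (d x₃) := by
  intro x₁ x₂ x₃
  simp only [hd, zinb, map_add, LinearMap.add_apply]
  abel
end

section
/- Let Z be a Zinbiel algebra with derivation d, and define x ≺ y = x·d(y), x ≻ y = d(x)·y. Then (x₁ ≺ x₂) ≻ x₃ = x₁ ≺ (x₂ ≻ x₃) + x₁ ≺ (x₃ ≺ x₂) + (x₁ ≻ x₃) ≺ x₂ − (x₁ ≺ x₃) ≺ x₂ for all x₁, x₂, x₃ ∈ Z. -/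
/-- In a Zinbiel algebra with a derivation, with x ≺ y = x·d(y) and x ≻ y = d(x)·y,
one has (x₁ ≺ x₂) ≻ x₃ = x₁ ≺ (x₂ ≻ x₃) + x₁ ≺ (x₃ ≺ x₂) + (x₁ ≻ x₃) ≺ x₂ − (x₁ ≺ x₃) ≺ x₂. -/
theorem preNovikov_identity4 (k Z : Type) [Field k] [AddCommGroup Z] [Module k Z]
    (mul : Z →ₗ[k] Z →ₗ[k] Z)
    (zinb : ∀ x y z : Z, mul (mul x y) z = mul x (mul y z) + mul x (mul z y))
    (d : Z →ₗ[k] Z)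
    (hd : ∀ x y : Z, d (mul x y) = mul (d x) y + mul x (d y)) :
    ∀ x₁ x₂ x₃ : Z,
      mul (d (mul x₁ (d x₂))) x₃ =
        mul x₁ (d (mul (d x₂) x₃)) + mul x₁ (d (mul x₃ (d x₂)))
          + mul (mul (d x₁) x₃) (d x₂) - mul (mul x₁ (d x₃)) (d x₂) := by
  intro x₁ x₂ x₃
  simp only [hd, zinb, map_add, LinearMap.add_apply]
  abel
end

section
/- Let P be a Perm algebra (associative algebra satisfying x(yz) = y(xz)) and let V be a Zinbiel algebra. Then the product on P ⊗ V defined by (p⊗u)(q⊗v) = pq ⊗ (v·u) + qp ⊗ (u·v) is commutative and associative. -/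
open scoped TensorProduct

/-- For a Perm algebra P and a Zinbiel algebra V, the product on P ⊗ V given by
(p⊗u)(q⊗v) = pq ⊗ (v·u) + qp ⊗ (u·v) is commutative and associative. -/
theorem perm_tensor_zinbiel_comm_assoc (k P V : Type) [Field k]
    [NonUnitalRing P] [Module k P] [AddCommGroup V] [Module k V]
    (hperm : ∀ p q r : P, p * (q * r) = q * (p * r))
    (mul : V →ₗ[k] V →ₗ[k] V)
    (zinb : ∀ x y z : V, mul (mul x y) z = mul x (mul y z) + mul x (mul z y))
    (m : P ⊗[k] V →ₗ[k] P ⊗[k] V →ₗ[k] P ⊗[k] V)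
    (hm : ∀ (p q : P) (u v : V),
      m (p ⊗ₜ[k] u) (q ⊗ₜ[k] v) = (p * q) ⊗ₜ[k] (mul v u) + (q * p) ⊗ₜ[k] (mul u v)) :
    (∀ a b : P ⊗[k] V, m a b = m b a) ∧
    (∀ a b c : P ⊗[k] V, m (m a b) c = m a (m b c)) := by
  constructor
  · intro a b
    induction a using TensorProduct.induction_on with
    | zero => simp
    | tmul p u =>
      induction b using TensorProduct.induction_on with
      | zero => simp
      | tmul q v => rw [hm, hm, add_comm]
      | add x y hx hy => simp [map_add, hx, hy]
    | add x y hx hy => simp [map_add, hx, hy]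
  · intro a b c
    induction a using TensorProduct.induction_on with
    | zero => simp
    | add x y hx hy => simp [map_add, hx, hy]
    | tmul p u =>
      induction b using TensorProduct.induction_on with
      | zero => simp
      | add x y hx hy => simp [map_add, hx, hy]
      | tmul q v =>
        induction c using TensorProduct.induction_on with
        | zero => simp
        | add x y hx hy => simp [map_add, hx, hy]
        | tmul r w =>
          rw [hm, hm, map_add, LinearMap.add_apply, map_add, hm, hm, hm, hm]
          simp only [zinb, TensorProduct.tmul_add, mul_assoc]
          rw [hperm r p q, hperm r q p, hperm p r q, hperm q p r]
          abel
end

section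
/- Let V be a (not necessarily associative) algebra with bilinear multiplication ν. Then there exists an associative algebra A with a derivation d and an injective linear map φ : V → A such that φ(ν(u,v)) = d(φ(u))·φ(v) + φ(v)·d(φ(u)) for all u, v ∈ V. -/
noncomputable section DiffEmbAux

open Finsupp

variable (k V : Type) [Field k] [AddCommGroup V] [Module k V]

/-- Index type of a basis of `V`. -/
abbrev DIdx : Type := Module.Basis.ofVectorSpaceIndex k V

/-- A basis of `V`. -/
def dBas : Module.Basis (DIdx k V) k V := Module.Basis.ofVectorSpace k V

/-- The free module on lists of basis indices (a model of the tensor algebra). -/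
abbrev DMod : Type := List (DIdx k V) →₀ k

/-- "Cons i" as a linear endomorphism of `DMod`. -/
def dCons (i : DIdx k V) : DMod k V →ₗ[k] DMod k V :=
  Finsupp.lmapDomain k k (List.cons i)

/-- The linear map `V →ₗ End(DMod)` sending basis vector `i` to `dCons i`. -/
def dP : V →ₗ[k] (DMod k V →ₗ[k] DMod k V) :=
  (dBas k V).constr k (dCons k V)

lemma dP_basis (i : DIdx k V) : dP k V (dBas k V i) = dCons k V i :=
  Module.Basis.constr_basis _ _ _ _

lemma dCons_single (i : DIdx k V) (l : List (DIdx k V)) (c : k) :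
    dCons k V i (single l c) = single (i :: l) c := by
  simp [dCons, lmapDomain_apply, mapDomain_single]

variable (ν : V →ₗ[k] V →ₗ[k] V)

/-- The values of the auxiliary operator `D` on basis monomials, defined by the
recursion forced by the compatibility identity. -/
def dDhat : List (DIdx k V) → DMod k V
  | [] => 0
  | [_] => 0
  | a :: b :: l =>
      dP k V (ν (dBas k V a) (dBas k V b)) (single l 1)
      + dP k V (dBas k V a) (dDhat (b :: l))
      - dP k V (dBas k V b) (dDhat (a :: l))
      + dP k V (dBas k V b) (dP k V (dBas k V a) (dDhat l))
termination_by l => l.length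

/-- The auxiliary operator giving the inner derivation. -/
def dD : DMod k V →ₗ[k] DMod k V :=
  Finsupp.linearCombination k (dDhat k V ν)

lemma dD_single (l : List (DIdx k V)) : dD k V ν (single l 1) = dDhat k V ν l := by
  simp [dD, linearCombination_single]

/-- The inner derivation `[D, ·]`. -/
def dDer : Module.End k (DMod k V) →ₗ[k] Module.End k (DMod k V) where
  toFun a := dD k V ν * a - a * dD k V ν
  map_add' a b := by noncomm_ring
  map_smul' c a := by
    simp only [RingHom.id_apply]
    rw [mul_smul_comm, smul_mul_assoc]
    exact (smul_sub c (dD k V ν * a) (a * dD k V ν)).symm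

lemma dDer_apply (a : Module.End k (DMod k V)) :
    dDer k V ν a = dD k V ν * a - a * dD k V ν := rfl

/-- The key identity for `dD` on arbitrary vectors. -/
lemma dD_key (l : List (DIdx k V)) (u v : V) :
    dD k V ν (dP k V u (dP k V v (single l 1)))
      = dP k V (ν u v) (single l 1)
        + dP k V u (dD k V ν (dP k V v (single l 1)))
        - dP k V v (dD k V ν (dP k V u (single l 1)))
        + dP k V v (dP k V u (dD k V ν (single l 1))) := by
  suffices h :
      (LinearMap.mk₂ k (fun u v => dD k V ν (dP k V u (dP k V v (single l 1))))
        (by intro m₁ m₂ n; simp [map_add, LinearMap.add_apply])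
        (by intro c m n; simp [map_smul, LinearMap.smul_apply])
        (by intro m n₁ n₂; simp [map_add, LinearMap.add_apply])
        (by intro c m n; simp [map_smul, LinearMap.smul_apply]))
      = (LinearMap.mk₂ k (fun u v =>
          dP k V (ν u v) (single l 1)
          + dP k V u (dD k V ν (dP k V v (single l 1)))
          - dP k V v (dD k V ν (dP k V u (single l 1)))
          + dP k V v (dP k V u (dD k V ν (single l 1))))
        (by intro m₁ m₂ n; simp [map_add, LinearMap.add_apply]; abel)
        (by intro c m n; simp [map_smul, LinearMap.smul_apply, smul_add, smul_sub])
        (by intro m n₁ n₂; simp [map_add, LinearMap.add_apply]; abel)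
        (by intro c m n; simp [map_smul, LinearMap.smul_apply, smul_add, smul_sub])) by
    exact DFunLike.congr_fun (DFunLike.congr_fun h u) v
  apply (dBas k V).ext; intro a
  apply (dBas k V).ext; intro b
  simp only [LinearMap.mk₂_apply]
  simp only [dP_basis, dCons_single, dD_single]
  rw [dDhat]
  simp only [dP_basis]

end DiffEmbAux

/-- Data witnessing an embedding of a nonassociative algebra (V, ν) into the
derived anti-commutator algebra of an associative differential algebra. -/
structure DiffAssocAntiCommEmbedding (k V : Type) [Field k] [AddCommGroup V] [Module k V]
    (ν : V →ₗ[k] V →ₗ[k] V) where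
  A : Type
  [ringA : Ring A]
  [algA : Algebra k A]
  d : A →ₗ[k] A
  leibniz : ∀ a b : A, d (a * b) = d a * b + a * d b
  φ : V →ₗ[k] A
  inj : Function.Injective φ
  compat : ∀ u v : V, φ (ν u v) = d (φ u) * φ v + φ v * d (φ u)

attribute [instance] DiffAssocAntiCommEmbedding.ringA DiffAssocAntiCommEmbedding.algA

/-- Every nonassociative algebra embeds into the derived anti-commutator algebra
of an associative algebra with a derivation. -/
theorem exists_diffAssoc_antiComm_embedding (k V : Type) [Field k]
    [AddCommGroup V] [Module k V] (ν : V →ₗ[k] V →ₗ[k] V) :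
    Nonempty (DiffAssocAntiCommEmbedding k V ν) := by
  classical
  refine ⟨{
    A := Module.End k (DMod k V)
    ringA := inferInstance
    algA := inferInstance
    d := dDer k V ν
    leibniz := ?_
    φ := dP k V
    inj := ?_
    compat := ?_ }⟩
  · intro a b
    apply LinearMap.ext
    intro x
    simp only [dDer_apply, LinearMap.sub_apply, LinearMap.add_apply, Module.End.mul_apply,
      map_sub]
    abel
  · rw [injective_iff_map_eq_zero]
    intro v hv
    have h0 : dP k V v (Finsupp.single [] (1:k)) = 0 := by rw [hv]; rfl
    have h1 : dP k V v (Finsupp.single [] (1:k))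
        = Finsupp.mapDomain (fun i : DIdx k V => [i]) ((dBas k V).repr v) := by
      rw [dP, Module.Basis.constr_apply, Finsupp.mapDomain]
      rw [Finsupp.sum, Finsupp.sum, LinearMap.sum_apply]
      refine Finset.sum_congr rfl fun i _ => ?_
      simp [dCons_single, Finsupp.smul_single]
    have hrepr : (dBas k V).repr v = 0 := by
      apply Finsupp.mapDomain_injective (f := fun i : DIdx k V => [i])
        (fun a b h => by simpa using h)
      rw [← h1, h0, Finsupp.mapDomain_zero]
    simpa using (dBas k V).repr.map_eq_zero_iff.mp hrepr
  · intro u v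
    apply Finsupp.lhom_ext
    intro l c
    have hc : (Finsupp.single l c : DMod k V) = c • Finsupp.single l 1 := by
      rw [Finsupp.smul_single, smul_eq_mul, mul_one]
    rw [hc, map_smul, map_smul]
    congr 1
    simp only [dDer_apply, LinearMap.sub_apply, Module.End.mul_apply, LinearMap.add_apply]
    rw [dD_key k V ν l u v]
    simp only [map_sub, map_add]
    abel
end
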